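/- arXiv:2106.01213 — 7 statements merged into one kernel-verified Lean document; each statement's English description precedes it below -/
import Mathlib

section
/- Let m ≥ n be natural numbers and let χ_{a,b} (for 0 ≤ a ≤ m, 0 ≤ b ≤ n) be complex numbers. Suppose (i) χ_{a,b} = 0 whenever a + b ≤ m − 1, and (ii) for every complex number B and all indices with 0 ≤ a ≤ m − 1 and 1 ≤ b ≤ n one has (a+1)·B·χ_{a,b} + b·conj(B)·χ_{a+1,b−1} = 0. Then χ_{a,b} = 0 for every pair (a,b) ≠ (m,n). -/
open ComplexConjugate

-- Taking `B = 1` and `B = I` separates the two terms.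
theorem Complex.eq_zero_and_eq_zero_of_forall_mul_add_conj_mul_eq_zero {p q x y : ℂ}
    (hp : p ≠ 0) (hq : q ≠ 0) (h : ∀ B : ℂ, p * B * x + q * conj B * y = 0) :
    x = 0 ∧ y = 0 := by
  have h_one := h 1
  have h_I := h I
  simp only [map_one, mul_one, conj_I] at h_one h_I
  have hpx : p * x = 0 := by
    linear_combination (h_one - I * h_I) / 2 + (p * x - q * y) / 2 * I_sq
  have hqy : q * y = 0 := by linear_combination h_one - hpx
  exact ⟨(mul_eq_zero_iff_left hp).1 hpx, (mul_eq_zero_iff_left hq).1 hqy⟩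

theorem null_rotation_invariant_spinor_components_vanish_general
    (m n : ℕ) (χ : ℕ → ℕ → ℂ)
    (h1 : ∀ a b : ℕ, a ≤ m → b ≤ n → a + b ≤ m - 1 → χ a b = 0)
    (h2 : ∀ B : ℂ, ∀ a b : ℕ, a ≤ m - 1 → 1 ≤ b → b ≤ n →
      ((a : ℂ) + 1) * B * χ a b + (b : ℂ) * (starRingEnd ℂ) B * χ (a + 1) (b - 1) = 0) :
    ∀ a b : ℕ, a ≤ m → b ≤ n → (a, b) ≠ (m, n) → χ a b = 0 := by
  have pair_vanish : ∀ a b : ℕ, a ≤ m - 1 → 1 ≤ b → b ≤ n →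
      χ a b = 0 ∧ χ (a + 1) (b - 1) = 0 := fun a b ha hb hbn =>
    Complex.eq_zero_and_eq_zero_of_forall_mul_add_conj_mul_eq_zero (Nat.cast_add_one_ne_zero a)
      (Nat.cast_ne_zero.2 (by omega)) (h2 · a b ha hb hbn)
  intro a b ha hb hne
  by_cases ha' : a ≤ m - 1
  · rcases Nat.eq_zero_or_pos b with rfl | hb_pos
    · exact h1 a 0 ha hb ha'
    · exact (pair_vanish a b ha' hb_pos hb).1
  · obtain rfl : a = m := by omega
    have hbn : b < n := lt_of_le_of_ne hb fun hbn => hne (by rw [hbn])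
    obtain ⟨k, rfl⟩ : ∃ k, a = k + 1 := ⟨a - 1, by omega⟩
    simpa using (pair_vanish k (b + 1) (by omega) (by omega) hbn).2

/-- Invariance of a totally symmetrized spinor of valence (m,n) under the full
two-parameter group of null rotations forces all components except χ_{m,n} to vanish. -/
theorem null_rotation_invariant_spinor_components_vanish
    (m n : ℕ) (hmn : n ≤ m) (χ : ℕ → ℕ → ℂ)
    (h1 : ∀ a b : ℕ, a ≤ m → b ≤ n → a + b ≤ m - 1 → χ a b = 0)
    (h2 : ∀ B : ℂ, ∀ a b : ℕ, a ≤ m - 1 → 1 ≤ b → b ≤ n →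
      ((a : ℂ) + 1) * B * χ a b + (b : ℂ) * (starRingEnd ℂ) B * χ (a + 1) (b - 1) = 0) :
    ∀ a b : ℕ, a ≤ m → b ≤ n → (a, b) ≠ (m, n) → χ a b = 0 :=
  null_rotation_invariant_spinor_components_vanish_general m n χ h1 h2
end

section
/- Let κ, ρ, σ, ε, β, π, δΛ, ΔΛ, δΦ12 be complex numbers and Φ12 a nonzero real number. Suppose δΛ, ΔΛ and δΦ12 are real, and the following equations hold: κ·Φ12 = 0; δΛ = (conj(ρ) − ε)·Φ12; δΛ = ρ·Φ12; 3·δΛ = (conj(ρ) + σ + 2ρ − 2·conj(ε))·Φ12; and 2·ΔΛ − δΦ12 = 2·(π + conj(π) + β)·Φ12. Then κ = 0, ρ is real, ε = 0, σ = 0, and β is real. -/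
open ComplexConjugate

theorem Complex.conj_eq_self_of_mul_ofReal {z : ℂ} {r : ℝ} (hr : r ≠ 0)
    (h : conj (z * r) = z * r) : conj z = z := by
  rw [Complex.conj_eq_iff_im] at h ⊢
  simpa [hr] using h

/-- Bianchi identities in Segre type [(1,3)]: κ = 0, ρ real, ε = 0, σ = 0, β real. -/
theorem segre13_bianchi_consequences
    (κ ρ σ ε β π δΛ ΔΛ δΦ12 : ℂ) (Φ12 : ℝ) (hΦ : Φ12 ≠ 0)
    (hδΛ : (starRingEnd ℂ) δΛ = δΛ) (hΔΛ : (starRingEnd ℂ) ΔΛ = ΔΛ)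
    (hδΦ : (starRingEnd ℂ) δΦ12 = δΦ12)
    (e1 : κ * (Φ12 : ℂ) = 0)
    (e2 : δΛ = ((starRingEnd ℂ) ρ - ε) * (Φ12 : ℂ))
    (e3 : δΛ = ρ * (Φ12 : ℂ))
    (e4 : 3 * δΛ = ((starRingEnd ℂ) ρ + σ + 2 * ρ - 2 * (starRingEnd ℂ) ε) * (Φ12 : ℂ))
    (e5 : 2 * ΔΛ - δΦ12 = 2 * (π + (starRingEnd ℂ) π + β) * (Φ12 : ℂ)) :
    κ = 0 ∧ (starRingEnd ℂ) ρ = ρ ∧ ε = 0 ∧ σ = 0 ∧ (starRingEnd ℂ) β = β := by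
  have hΦC : (Φ12 : ℂ) ≠ 0 := Complex.ofReal_ne_zero.mpr hΦ
  have hκ : κ = 0 := (mul_eq_zero.mp e1).resolve_right hΦC
  have hρ : conj ρ = ρ := Complex.conj_eq_self_of_mul_ofReal hΦ (by rw [← e3, hδΛ])
  have hε : ε = 0 := by
    have h := mul_right_cancel₀ hΦC (e2.symm.trans e3)
    rw [hρ] at h
    linear_combination -h
  have hσ : σ = 0 := by
    rw [hρ, hε, map_zero] at e4
    exact (mul_eq_zero.mp (by linear_combination 3 * e3 - e4)).resolve_right hΦC
  have hβ : conj β = β := by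
    have hsum := Complex.conj_eq_self_of_mul_ofReal hΦ (by rw [← e5]; simp [map_ofNat, hΔΛ, hδΦ])
    rw [Complex.conj_eq_iff_im] at hsum ⊢
    simpa using hsum
  exact ⟨hκ, hρ, hε, hσ, hβ⟩
end

section
/- Let α, β, τ, π, δΦ12, ΔΛ be complex numbers and Φ12 a nonzero real number, with β real. Suppose the following equations hold: δΦ12 = 2·(conj(τ) − α)·Φ12; 2·ΔΛ − δΦ12 = 2·(π + conj(π) + β)·Φ12; and 3·ΔΛ − 2·δΦ12 = (2·(β + conj(β) + π + conj(π)) − τ − conj(τ))·Φ12. Then α + τ + (π + conj(π)) = β. -/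
/-- Bianchi identities (Bc), (Bf), (Bk) in Segre type [(1,3)] imply
α + τ + (π + conj π) = β. -/
theorem segre13_abtp_identity
    (α β τ π δΦ12 ΔΛ : ℂ) (Φ12 : ℝ) (hΦ : Φ12 ≠ 0)
    (hβ : (starRingEnd ℂ) β = β)
    (e1 : δΦ12 = 2 * ((starRingEnd ℂ) τ - α) * (Φ12 : ℂ))
    (e2 : 2 * ΔΛ - δΦ12 = 2 * (π + (starRingEnd ℂ) π + β) * (Φ12 : ℂ))
    (e3 : 3 * ΔΛ - 2 * δΦ12 =
      (2 * (β + (starRingEnd ℂ) β + π + (starRingEnd ℂ) π) - τ - (starRingEnd ℂ) τ) * (Φ12 : ℂ)) :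
    α + τ + (π + (starRingEnd ℂ) π) = β := by
  have h2Φ : 2 * (Φ12 : ℂ) ≠ 0 := mul_ne_zero two_ne_zero (Complex.ofReal_ne_zero.mpr hΦ)
  refine mul_right_cancel₀ h2Φ ?_
  -- (Bc) - 3 (Bf) + 2 (Bk) eliminates both derivative terms δΦ12 and ΔΛ.
  linear_combination e1 - 3 * e2 + 2 * e3 + 4 * (Φ12 : ℂ) * hβ
end

section
/- Let κ, ρ, σ, ε, α, β, τ, π, δΦ11, δΛ be complex numbers, Φ11 a nonzero real number and Φ22 a nonzero real number. Suppose δΦ11 and δΛ are real, and the following equations hold: (κ + conj(κ))·Φ11 = 0; (ε − conj(ε))·Φ11 = 0; (ρ + conj(σ))·Φ11 = 0; 2·δΦ11 − 2·δΛ = 2·(2·(α − conj(β)) + (τ + conj(τ)))·Φ11; and −3·δΦ11 + 3·δΛ = 2·(−2α + 2·conj(β) + π + conj(π) − τ − conj(τ))·Φ11 − κ·Φ22. Then ε is real, ρ + conj(σ) = 0, α − conj(β) is real, and κ = 0. -/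
/-! Every equation has the shape `z * Φ = w` with `Φ` a nonzero real, so it can be cancelled. The
first three give `ε` real, `ρ + σ̄ = 0` and `Re κ = 0`. Since `δΦ11`, `δΛ` and every `τ + τ̄`,
`π + π̄` are real, the imaginary part of the fourth equation forces `Im (α - β̄) = 0`; with this,
the imaginary part of the fifth reduces to `Im κ · Φ22 = 0`, so `κ = 0`. -/

theorem Complex.eq_zero_of_mul_ofReal_eq_zero {z : ℂ} {r : ℝ} (hr : r ≠ 0) (h : z * r = 0) :
    z = 0 :=
  (mul_eq_zero.mp h).resolve_right (Complex.ofReal_ne_zero.mpr hr)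

/-- Bianchi identities in Segre type [1(1,2)]: ε real, ρ + conj σ = 0,
α − conj β real, κ = 0. -/
theorem segre112_bianchi_consequences
    (κ ρ σ ε α β τ π δΦ11 δΛ : ℂ) (Φ11 Φ22 : ℝ)
    (hΦ11 : Φ11 ≠ 0) (hΦ22 : Φ22 ≠ 0)
    (hδΦ : (starRingEnd ℂ) δΦ11 = δΦ11) (hδΛ : (starRingEnd ℂ) δΛ = δΛ)
    (e1 : (κ + (starRingEnd ℂ) κ) * (Φ11 : ℂ) = 0)
    (e2 : (ε - (starRingEnd ℂ) ε) * (Φ11 : ℂ) = 0)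
    (e3 : (ρ + (starRingEnd ℂ) σ) * (Φ11 : ℂ) = 0)
    (e4 : 2 * δΦ11 - 2 * δΛ =
      2 * (2 * (α - (starRingEnd ℂ) β) + (τ + (starRingEnd ℂ) τ)) * (Φ11 : ℂ))
    (e5 : -3 * δΦ11 + 3 * δΛ =
      2 * (-2 * α + 2 * (starRingEnd ℂ) β + π + (starRingEnd ℂ) π - τ - (starRingEnd ℂ) τ) * (Φ11 : ℂ)
        - κ * (Φ22 : ℂ)) :
    (starRingEnd ℂ) ε = ε ∧ ρ + (starRingEnd ℂ) σ = 0 ∧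
      (starRingEnd ℂ) (α - (starRingEnd ℂ) β) = α - (starRingEnd ℂ) β ∧ κ = 0 := by
  have hε : (starRingEnd ℂ) ε = ε :=
    (sub_eq_zero.mp (Complex.eq_zero_of_mul_ofReal_eq_zero hΦ11 e2)).symm
  have hρσ : ρ + (starRingEnd ℂ) σ = 0 := Complex.eq_zero_of_mul_ofReal_eq_zero hΦ11 e3
  have hκ_re : κ.re = 0 := by
    simpa [Complex.add_conj] using Complex.eq_zero_of_mul_ofReal_eq_zero hΦ11 e1
  rw [Complex.conj_eq_iff_im] at hδΦ hδΛ
  have hαβ_im : (α - (starRingEnd ℂ) β).im = 0 := by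
    simpa [hδΦ, hδΛ, hΦ11] using congrArg Complex.im e4
  have hκ_im : κ.im = 0 := by
    have hαβ : α.im + β.im = 0 := by simpa using hαβ_im
    have e5_im : 0 = 2 * (-(2 * α.im) + -(2 * β.im)) * Φ11 - κ.im * Φ22 := by
      simpa [hδΦ, hδΛ] using congrArg Complex.im e5
    have hκΦ22 : κ.im * Φ22 = 0 := by linear_combination e5_im - 4 * Φ11 * hαβ
    exact (mul_eq_zero.mp hκΦ22).resolve_right hΦ22
  exact ⟨hε, hρσ, Complex.conj_eq_iff_im.mpr hαβ_im, Complex.ext hκ_re hκ_im⟩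
end

section
/- Let α, β, τ, π, δΦ11, δΛ be complex numbers and Φ11 a nonzero real number, with α − conj(β) real. Suppose the following equations hold: 2·δΦ11 − 2·δΛ = 2·(2·(conj(α) − β) − (π + conj(π)))·Φ11; 2·δΦ11 − 2·δΛ = 2·(2·(α − conj(β)) + (τ + conj(τ)))·Φ11; and −3·δΦ11 + 3·δΛ = 2·(−2·(α − conj(β)) + (π + conj(π)) − (τ + conj(τ)))·Φ11. Then (τ + conj(τ)) + (π + conj(π)) = 0, (π + conj(π)) + 2·(α − conj(β)) = 0, and α + conj(α) = (β + conj(β)) + (τ + conj(τ)). -/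
/-!
Write `A = α - β̄`, `T = τ + τ̄`, `P = π + π̄`. Since `A` is real, `ᾱ - β = Ā = A`, so the three
Bianchi identities form a linear system in `δΦ11 - δΛ` and `A Φ11, T Φ11, P Φ11`. Eliminating
`δΦ11 - δΛ` and cancelling `Φ11 ≠ 0` gives `T + P = 0` and `P + 2A = 0`; finally
`α + ᾱ - (β + β̄) = A + Ā = 2A = -P = T`.
-/

lemma conj_sub_eq_of_conj_sub_conj_eq {α β : ℂ}
    (h : (starRingEnd ℂ) (α - (starRingEnd ℂ) β) = α - (starRingEnd ℂ) β) :
    (starRingEnd ℂ) α - β = α - (starRingEnd ℂ) β := by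
  rwa [map_sub, Complex.conj_conj] at h

lemma bianchi_linear_system_consequences {K : Type*} [Field K] [CharZero K]
    {a t p d l φ : K} (hφ : φ ≠ 0)
    (e1 : 2 * d - 2 * l = 2 * (2 * a - p) * φ)
    (e2 : 2 * d - 2 * l = 2 * (2 * a + t) * φ)
    (e3 : -3 * d + 3 * l = 2 * (-2 * a + p - t) * φ) :
    t + p = 0 ∧ p + 2 * a = 0 := by
  have htp : (t + p) * φ = 0 := by linear_combination (e1 - e2) / 2
  have hpa : (p + 2 * a) * φ = 0 := by linear_combination -(2 * e3 + e1 + 2 * e2) / 2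
  exact ⟨(mul_eq_zero.mp htp).resolve_right hφ, (mul_eq_zero.mp hpa).resolve_right hφ⟩

/-- Bianchi identities (Bg), (Bh), (Bj) in Segre type [1(1,2)] with κ = 0, Φ12 = 0. -/
theorem segre112_ptident_lmcond_abpident
    (α β τ π δΦ11 δΛ : ℂ) (Φ11 : ℝ) (hΦ : Φ11 ≠ 0)
    (hab : (starRingEnd ℂ) (α - (starRingEnd ℂ) β) = α - (starRingEnd ℂ) β)
    (e1 : 2 * δΦ11 - 2 * δΛ =
      2 * (2 * ((starRingEnd ℂ) α - β) - (π + (starRingEnd ℂ) π)) * (Φ11 : ℂ))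
    (e2 : 2 * δΦ11 - 2 * δΛ =
      2 * (2 * (α - (starRingEnd ℂ) β) + (τ + (starRingEnd ℂ) τ)) * (Φ11 : ℂ))
    (e3 : -3 * δΦ11 + 3 * δΛ =
      2 * (-2 * (α - (starRingEnd ℂ) β) + (π + (starRingEnd ℂ) π) - (τ + (starRingEnd ℂ) τ)) * (Φ11 : ℂ)) :
    (τ + (starRingEnd ℂ) τ) + (π + (starRingEnd ℂ) π) = 0 ∧
      (π + (starRingEnd ℂ) π) + 2 * (α - (starRingEnd ℂ) β) = 0 ∧
      α + (starRingEnd ℂ) α = (β + (starRingEnd ℂ) β) + (τ + (starRingEnd ℂ) τ) := by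
  have hA := conj_sub_eq_of_conj_sub_conj_eq hab
  rw [hA] at e1
  obtain ⟨htp, hpa⟩ :=
    bianchi_linear_system_consequences (Complex.ofReal_ne_zero.mpr hΦ) e1 e2 e3
  exact ⟨htp, hpa, by linear_combination hA + hpa - htp⟩
end

section
/- Let κ, ρ, ε, δΛ, ΔΛ be complex numbers and Φ22 a nonzero real number. Suppose the following equations hold: −2·δΛ = conj(κ)·Φ22; −2·δΛ = 0; 2·ΔΛ = (conj(ρ) − 2ε − 2·conj(ε))·Φ22; and 3·ΔΛ = (ρ + conj(ρ) − 2ε − 2·conj(ε))·Φ22. Then δΛ = 0, κ = 0, ρ is real, ρ = −2·(ε + conj(ε)), and ΔΛ = ρ·Φ22. -/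
/-- Conjugating `star z - 2 * z` gives `z - 2 * star z`; the two agree only if `3 * star z = 3 * z`. -/
theorem IsSelfAdjoint.of_star_sub_two_mul {K : Type*} [Field K] [CharZero K] [StarRing K] {z : K}
    (h : IsSelfAdjoint (star z - 2 * z)) : IsSelfAdjoint z := by
  have hconj : z - 2 * star z = star z - 2 * z := by
    simpa only [star_sub, star_mul', star_star, star_ofNat] using h.star_eq
  show star z = z
  linear_combination (-1 / 3 : K) * hconj

/-- Bianchi identities (Bg), (Bh), (Bf), (Bk) in Segre type [(11,2)]: δΛ = 0, κ = 0,
ρ real, ρ = −2(ε + conj ε), ΔΛ = ρΦ22. -/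
theorem segre112rad_bianchi_consequences
    (κ ρ ε δΛ ΔΛ : ℂ) (Φ22 : ℝ) (hΦ : Φ22 ≠ 0)
    (e1 : -2 * δΛ = (starRingEnd ℂ) κ * (Φ22 : ℂ))
    (e2 : -2 * δΛ = 0)
    (e3 : 2 * ΔΛ = ((starRingEnd ℂ) ρ - 2 * ε - 2 * (starRingEnd ℂ) ε) * (Φ22 : ℂ))
    (e4 : 3 * ΔΛ = (ρ + (starRingEnd ℂ) ρ - 2 * ε - 2 * (starRingEnd ℂ) ε) * (Φ22 : ℂ)) :
    δΛ = 0 ∧ κ = 0 ∧ (starRingEnd ℂ) ρ = ρ ∧ ρ = -2 * (ε + (starRingEnd ℂ) ε) ∧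
      ΔΛ = ρ * (Φ22 : ℂ) := by
  have hΦ' : (Φ22 : ℂ) ≠ 0 := Complex.ofReal_ne_zero.mpr hΦ
  have hδ : δΛ = 0 := by linear_combination (-1 / 2 : ℂ) * e2
  have hκ : κ = 0 := by
    have h : (starRingEnd ℂ) κ * (Φ22 : ℂ) = 0 := by linear_combination e2 - e1
    simpa [hΦ'] using h
  have hρε : star ρ - 2 * ρ = 2 * (ε + star ε) :=
    mul_right_cancel₀ hΦ' (by simp only [Complex.star_def]; linear_combination 2 * e4 - 3 * e3)
  have hρ : (starRingEnd ℂ) ρ = ρ :=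
    IsSelfAdjoint.of_star_sub_two_mul (hρε ▸ (IsSelfAdjoint.ofNat 2).mul (.add_star_self ε))
  refine ⟨hδ, hκ, hρ, ?_, by linear_combination e4 - e3⟩
  simp only [Complex.star_def] at hρε
  linear_combination hρ - hρε
end

section
/- Let ρ, σ, γ, λ, μ, ΔΦ11, ΔΛ be complex numbers, ε a real number, and Φ11, Φ22 nonzero real numbers. Suppose ρ + conj(σ) = 0, ΔΦ11 and ΔΛ are real, and the following equations hold: −2·ΔΦ11 = 2·(2·γ − 2·conj(γ) + conj(μ) + λ)·Φ11 − conj(σ)·Φ22; 2·ΔΛ = −2·(μ + conj(λ))·Φ11 + (conj(ρ) − 4·ε)·Φ22; and 3·ΔΛ + ΔΦ11 = (ρ + conj(ρ) − 4·ε)·Φ22 − 2·(μ + conj(μ) + λ + conj(λ))·Φ11. Then ρ + conj(ρ) + 4·ε = 0. -/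
/-!
Adding each of (Bc) and (Bf) to its complex conjugate kills γ - γ̄ and, since ΔΦ11 and ΔΛ are
real, leaves two real equations in ΔΦ11, ΔΛ, the trace μ + μ̄ + λ + λ̄ and ρ + ρ̄ (using
σ̄ = -ρ). Eliminating ΔΦ11, ΔΛ and the trace between these and (Bk) leaves
2 (ρ + ρ̄ + 4ε) Φ22 = 0, and Φ22 ≠ 0.
-/

section SymmetrizedBianchi

open ComplexConjugate

variable {ρ σ γ lam μ ΔΦ11 ΔΛ : ℂ} {ε Φ11 Φ22 : ℝ}

theorem bianchi_Bc_add_conj (hρσ : ρ + conj σ = 0) (hΔΦ : conj ΔΦ11 = ΔΦ11)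
    (e1 : -2 * ΔΦ11 =
      2 * (2 * γ - 2 * conj γ + conj μ + lam) * (Φ11 : ℂ) - conj σ * (Φ22 : ℂ)) :
    -4 * ΔΦ11 = 2 * (μ + conj μ + lam + conj lam) * (Φ11 : ℂ) + (ρ + conj ρ) * (Φ22 : ℂ) := by
  have e1c := congrArg conj e1
  have hρσc := congrArg conj hρσ
  simp only [map_mul, map_add, map_sub, map_neg, map_zero, map_ofNat, Complex.conj_ofReal,
    Complex.conj_conj, hΔΦ] at e1c hρσc
  linear_combination e1 + e1c - (Φ22 : ℂ) * hρσ - (Φ22 : ℂ) * hρσc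

theorem bianchi_Bf_add_conj (hΔΛ : conj ΔΛ = ΔΛ)
    (e2 : 2 * ΔΛ = -2 * (μ + conj lam) * (Φ11 : ℂ) + (conj ρ - 4 * (ε : ℂ)) * (Φ22 : ℂ)) :
    4 * ΔΛ = -2 * (μ + conj μ + lam + conj lam) * (Φ11 : ℂ)
      + (ρ + conj ρ - 8 * (ε : ℂ)) * (Φ22 : ℂ) := by
  have e2c := congrArg conj e2
  simp only [map_mul, map_add, map_sub, map_neg, map_ofNat, Complex.conj_ofReal,
    Complex.conj_conj, hΔΛ] at e2c
  linear_combination e2 + e2c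

end SymmetrizedBianchi

theorem cf_segre112_rho_eps_relation_general
    (ρ σ γ lam μ ΔΦ11 ΔΛ : ℂ) (ε : ℝ) (Φ11 Φ22 : ℝ)
    (hΦ22 : Φ22 ≠ 0)
    (hρσ : ρ + (starRingEnd ℂ) σ = 0)
    (hΔΦ : (starRingEnd ℂ) ΔΦ11 = ΔΦ11) (hΔΛ : (starRingEnd ℂ) ΔΛ = ΔΛ)
    (e1 : -2 * ΔΦ11 =
      2 * (2 * γ - 2 * (starRingEnd ℂ) γ + (starRingEnd ℂ) μ + lam) * (Φ11 : ℂ)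
        - (starRingEnd ℂ) σ * (Φ22 : ℂ))
    (e2 : 2 * ΔΛ = -2 * (μ + (starRingEnd ℂ) lam) * (Φ11 : ℂ)
        + ((starRingEnd ℂ) ρ - 4 * (ε : ℂ)) * (Φ22 : ℂ))
    (e3 : 3 * ΔΛ + ΔΦ11 = (ρ + (starRingEnd ℂ) ρ - 4 * (ε : ℂ)) * (Φ22 : ℂ)
        - 2 * (μ + (starRingEnd ℂ) μ + lam + (starRingEnd ℂ) lam) * (Φ11 : ℂ)) :
    ρ + (starRingEnd ℂ) ρ + 4 * (ε : ℂ) = 0 := by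
  have bc := bianchi_Bc_add_conj hρσ hΔΦ e1
  have bf := bianchi_Bf_add_conj hΔΛ e2
  have key : (ρ + (starRingEnd ℂ) ρ + 4 * (ε : ℂ)) * (Φ22 : ℂ) = 0 := by
    linear_combination (1 / 2 : ℂ) * (3 * bf - bc - 4 * e3)
  exact (mul_eq_zero.mp key).resolve_right (Complex.ofReal_ne_zero.mpr hΦ22)

/-- Bianchi identities (Bc), (Bf), (Bk) for a conformally flat Segre type [1(1,2)]
spacetime: ρ + conj ρ + 4ε = 0. -/
theorem cf_segre112_rho_eps_relation
    (ρ σ γ lam μ ΔΦ11 ΔΛ : ℂ) (ε : ℝ) (Φ11 Φ22 : ℝ)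
    (hΦ11 : Φ11 ≠ 0) (hΦ22 : Φ22 ≠ 0)
    (hρσ : ρ + (starRingEnd ℂ) σ = 0)
    (hΔΦ : (starRingEnd ℂ) ΔΦ11 = ΔΦ11) (hΔΛ : (starRingEnd ℂ) ΔΛ = ΔΛ)
    (e1 : -2 * ΔΦ11 =
      2 * (2 * γ - 2 * (starRingEnd ℂ) γ + (starRingEnd ℂ) μ + lam) * (Φ11 : ℂ)
        - (starRingEnd ℂ) σ * (Φ22 : ℂ))
    (e2 : 2 * ΔΛ = -2 * (μ + (starRingEnd ℂ) lam) * (Φ11 : ℂ)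
        + ((starRingEnd ℂ) ρ - 4 * (ε : ℂ)) * (Φ22 : ℂ))
    (e3 : 3 * ΔΛ + ΔΦ11 = (ρ + (starRingEnd ℂ) ρ - 4 * (ε : ℂ)) * (Φ22 : ℂ)
        - 2 * (μ + (starRingEnd ℂ) μ + lam + (starRingEnd ℂ) lam) * (Φ11 : ℂ)) :
    ρ + (starRingEnd ℂ) ρ + 4 * (ε : ℂ) = 0 :=
  cf_segre112_rho_eps_relation_general ρ σ γ lam μ ΔΦ11 ΔΛ ε Φ11 Φ22 hΦ22 hρσ hΔΦ hΔΛ e1 e2 e3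
end
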